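/- Let n ≥ 2, let x1, …, xn ∈ {0,1}, let 1 ≤ k ≤ n − 1, and let d ∈ {0,1}. Over the alphabet Σ = {r, 0, 1}, define the DTD D by D(r) = {01, 10}, D(0) = {01, 10, 11, ε}, and D(1) = {01, 10, 00, ε}. Define binary trees B(n), …, B(1) by: B(n) is a leaf labeled xn; for n − 1 ≥ i ≥ 1 with i ≠ k, B(i) is a node labeled xi with two children, in order: B(i+1) and a leaf labeled by the negation of x(i+1); B(k) is a node labeled xk with two children, in order: B(k+1) and a leaf labeled d. Let t be the tree with a root labeled r having two children, in order: B(1) and a leaf labeled by the negation of x1. Then t is valid against D if and only if it is not the case that d = xk and d = x(k+1) (i.e., if and only if not xk = x(k+1) = d). -/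

import Mathlib

/-- Ordered labeled trees (rose trees). -/
inductive RTree (α : Type) : Type
  | node : α → List (RTree α) → RTree α

/-- Extended binary trees: every node has an optional left and right child. -/
inductive BTree (α : Type) : Type
  | nil : BTree α
  | node : α → BTree α → BTree α → BTree α

namespace BTree

/-- Tag sequence of an extended binary tree: opening tag, left subtree,
right subtree, closing tag.  `false` = opening tag, `true` = closing tag. -/
def btags {α : Type} : BTree α → List (α × Bool)
  | .nil => []
  | .node a l r => (a, false) :: (btags l ++ btags r ++ [(a, true)])

end BTree

namespace RTree

variable {α : Type}

def label : RTree α → α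
  | .node a _ => a

def childLabels : RTree α → List α
  | .node _ cs => cs.map label

mutual
/-- Number of nodes of a tree. -/
def size : RTree α → ℕ
  | .node _ cs => 1 + sizeL cs
def sizeL : List (RTree α) → ℕ
  | [] => 0
  | c :: cs => size c + sizeL cs
end

mutual
/-- `XML(t)`: the tag sequence of a depth-first traversal;
`(a, false)` is an opening tag, `(a, true)` a closing tag. -/
def xml : RTree α → List (α × Bool)
  | .node a cs => (a, false) :: (xmlL cs ++ [(a, true)])
def xmlL : List (RTree α) → List (α × Bool)
  | [] => []
  | c :: cs => xml c ++ xmlL cs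
end

mutual
/-- XML tag sequence where each node is identified by its path
(list of child indices from the root). -/
def ptags : RTree α → List ℕ → List (List ℕ × Bool)
  | .node _ cs, p => (p, false) :: (ptagsL cs p 0 ++ [(p, true)])
def ptagsL : List (RTree α) → List ℕ → ℕ → List (List ℕ × Bool)
  | [], _, _ => []
  | c :: cs, p, i => ptags c (p ++ [i]) ++ ptagsL cs p (i + 1)
end

/-- `XML(t)`, with nodes identified by their paths. -/
def tagList (t : RTree α) : List (List ℕ × Bool) := ptags t []

/-- `pos(v)`: (1-indexed) position of the opening tag of node `v` in `XML(t)`. -/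
def posOpen (t : RTree α) (v : List ℕ) : ℕ := (tagList t).idxOf (v, false) + 1

/-- `pos(v̄)`: (1-indexed) position of the closing tag of node `v` in `XML(t)`. -/
def posClose (t : RTree α) (v : List ℕ) : ℕ := (tagList t).idxOf (v, true) + 1

/-- Subtree of `t` rooted at the node with path `p` (if any). -/
def subtreeAt : RTree α → List ℕ → Option (RTree α)
  | t, [] => some t
  | .node _ cs, i :: p =>
    match cs[i]? with
    | some c => subtreeAt c p
    | none => none

/-- `p` is (the path of) a node of `t`. -/
def IsNode (t : RTree α) (p : List ℕ) : Prop := (subtreeAt t p).isSome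

/-- First-child next-sibling encoding of a forest. -/
def fcnsL : List (RTree α) → BTree α
  | [] => .nil
  | .node a cs :: ts => .node a (fcnsL cs) (fcnsL ts)

/-- First-child next-sibling encoding `FCNS(t)`. -/
def fcns (t : RTree α) : BTree α := fcnsL [t]

/-- FCNS encoding of a forest, nodes identified by their paths in the original tree;
`p` is the path of the parent, `i` the index of the first tree of the forest. -/
def pfcnsL : List (RTree α) → List ℕ → ℕ → BTree (List ℕ)
  | [], _, _ => .nil
  | .node _ cs :: ts, p, i =>
      .node (p ++ [i]) (pfcnsL cs (p ++ [i]) 0) (pfcnsL ts p (i + 1))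

/-- `FCNS(t)`, with nodes identified by their paths in `t`. -/
def pfcns : RTree α → BTree (List ℕ)
  | .node _ cs => .node [] (pfcnsL cs [] 0) .nil

/-- `XML(FCNS(t))`, with nodes identified by their paths in `t`. -/
def btagList (t : RTree α) : List (List ℕ × Bool) := (pfcns t).btags

/-- `pos'(v)`: position of the opening tag of `v` in `XML(FCNS(t))`. -/
def posOpen' (t : RTree α) (v : List ℕ) : ℕ := (btagList t).idxOf (v, false) + 1

/-- `pos'(v̄)`: position of the closing tag of `v` in `XML(FCNS(t))`. -/
def posClose' (t : RTree α) (v : List ℕ) : ℕ := (btagList t).idxOf (v, true) + 1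

/-- A tree is valid against a DTD `D` if for every node, the word of labels of
its children belongs to `D` applied to the node's label. -/
def Valid (D : α → List α → Prop) (t : RTree α) : Prop :=
  ∀ p st, subtreeAt t p = some st → D st.label st.childLabels

end RTree

/-- `w` is a later sibling of `v` (as paths): same parent, larger last index. -/
def LaterSib (w v : List ℕ) : Prop := ∃ q i j, v = q ++ [i] ∧ w = q ++ [j] ∧ i < j

/-- The alphabet `Σ = {r, 0, 1}`. -/
inductive Sig : Type
  | r : Sig
  | b0 : Sig
  | b1 : Sig

/-- The label corresponding to a bit. -/
def bit : Bool → Sig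
  | false => .b0
  | true => .b1

/-- The DTD `D`: `D(r) = 01 | 10`, `D(0) = 01 | 10 | 11 | ε`,
`D(1) = 01 | 10 | 00 | ε`. -/
def Dbin : Sig → List Sig → Prop
  | .r, w => w = [.b0, .b1] ∨ w = [.b1, .b0]
  | .b0, w => w = [.b0, .b1] ∨ w = [.b1, .b0] ∨ w = [.b1, .b1] ∨ w = []
  | .b1, w => w = [.b0, .b1] ∨ w = [.b1, .b0] ∨ w = [.b0, .b0] ∨ w = []

/-- The trees `B(n), …, B(1)`: `hardB x d n k c` is `B(n - c)`.  `B(n)` is a leaf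
labeled `x_n`; for `i < n`, `B(i)` is a node labeled `x_i` whose two children are,
in order, `B(i+1)` and a leaf labeled `d` if `i = k`, resp. the negation of
`x_{i+1}` if `i ≠ k`.  Thus `hardB x d n k (n - 1) = B(1)`. -/
def hardB (x : ℕ → Bool) (d : Bool) (n k : ℕ) : ℕ → RTree Sig
  | 0 => .node (bit (x n)) []
  | c + 1 => .node (bit (x (n - (c + 1))))
      [hardB x d n k c,
       .node (bit (if n - (c + 1) = k then d else !(x (n - (c + 1) + 1)))) []]

namespace RTree

variable {α : Type}

theorem valid_node_iff (D : α → List α → Prop) (a : α) (cs : List (RTree α)) :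
    Valid D (.node a cs) ↔ D a (cs.map label) ∧ ∀ c ∈ cs, Valid D c := by
  constructor
  · intro h
    refine ⟨h [] _ rfl, fun c hc p st hst => ?_⟩
    obtain ⟨i, hi⟩ := List.mem_iff_getElem?.mp hc
    exact h (i :: p) st (by simp only [subtreeAt, hi, hst])
  · rintro ⟨hroot, hchildren⟩ p st hst
    match p, hst with
    | [], rfl => exact hroot
    | i :: p, hst =>
      simp only [subtreeAt] at hst
      split at hst
      · exact hchildren _ (List.mem_of_getElem? ‹_›) p st hst
      · cases hst

theorem label_node (a : α) (cs : List (RTree α)) : (node a cs).label = a := rfl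

theorem valid_leaf_iff (D : α → List α → Prop) (a : α) :
    Valid D (.node a []) ↔ D a [] := by
  simp [valid_node_iff]

theorem valid_node_pair_iff (D : α → List α → Prop) (a : α) (t₁ t₂ : RTree α) :
    Valid D (.node a [t₁, t₂]) ↔ D a [t₁.label, t₂.label] ∧ Valid D t₁ ∧ Valid D t₂ := by
  simp [valid_node_iff]

end RTree

theorem Dbin_bit_nil (b : Bool) : Dbin (bit b) [] := by
  cases b <;> simp [bit, Dbin]

theorem Dbin_bit_not (a : Sig) (b : Bool) : Dbin a [bit b, bit !b] := by
  cases a <;> cases b <;> simp [bit, Dbin]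

theorem Dbin_bit_pair_iff (a b c : Bool) :
    Dbin (bit a) [bit b, bit c] ↔ ¬ (c = a ∧ c = b) := by
  cases a <;> cases b <;> cases c <;> simp [bit, Dbin]

theorem valid_bit_leaf (b : Bool) : RTree.Valid Dbin (.node (bit b) []) :=
  (RTree.valid_leaf_iff _ _).mpr (Dbin_bit_nil b)

theorem hardB_label (x : ℕ → Bool) (d : Bool) (n k : ℕ) :
    ∀ c, (hardB x d n k c).label = bit (x (n - c))
  | 0 => rfl
  | _ + 1 => rfl

/-- `hardB x d n k c` is `B(n - c)`, which contains `B(k)` iff `n - c ≤ k`. Only `B(k)` can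
violate the DTD: every other inner node has children labeled by a bit and its negation. -/
theorem hardB_valid_iff (x : ℕ → Bool) (d : Bool) {n k : ℕ} (hkn : k < n) :
    ∀ c < n, RTree.Valid Dbin (hardB x d n k c) ↔
      (n - c ≤ k → ¬ (d = x k ∧ d = x (k + 1)))
  | 0, _ => by
    simp only [hardB, valid_bit_leaf, true_iff]
    omega
  | c + 1, hc => by
    have ih := hardB_valid_iff x d hkn c (by omega)
    simp only [hardB, RTree.valid_node_pair_iff, hardB_label, RTree.label_node, valid_bit_leaf,
      and_true, ih]
    by_cases hck : n - (c + 1) = k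
    · have hsucc : n - c = k + 1 := by omega
      simp only [hck, hsucc, if_true, Dbin_bit_pair_iff, Nat.not_succ_le_self, false_implies,
        and_true, le_refl, true_implies]
    · have hsucc : n - (c + 1) + 1 = n - c := by omega
      simp only [hck, if_false, hsucc, Dbin_bit_not, true_and]
      exact ⟨fun h hle => h (by omega), fun h hle => h (by omega)⟩

/-- Let `t` be the tree with a root labeled `r` having the two
children `B(1)` and a leaf labeled by the negation of `x₁`, in this order.  Then
`t` is valid against `D` iff it is not the case that `d = x_k` and
`d = x_{k+1}`. -/
theorem hard_binary_valid_iff (n : ℕ) (hn : 2 ≤ n) (k : ℕ) (hk : 1 ≤ k)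
    (hkn : k ≤ n - 1) (x : ℕ → Bool) (d : Bool) :
    RTree.Valid Dbin
        (.node .r [hardB x d n k (n - 1), .node (bit (!(x 1))) []]) ↔
      ¬ (d = x k ∧ d = x (k + 1)) := by
  have hB1 : n - (n - 1) = 1 := by omega
  simp only [RTree.valid_node_pair_iff, hardB_label, hB1, RTree.label_node, Dbin_bit_not,
    valid_bit_leaf, and_true, true_and,
    hardB_valid_iff x d (show k < n by omega) (n - 1) (by omega), hk, true_implies]
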